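/- arXiv:2111.14020 — 6 statements merged into one kernel-verified Lean document; each statement's English description precedes it below -/
import Mathlib

section
/- Let L = L_D + L_F where L_D and L_F are symmetric positive semidefinite matrices. Then for any s ∈ ℝ^n, sᵀ(I+L)⁻²s ≤ sᵀ(I+L_F)⁻¹s. That is, the polarization of the full graph is at most the polarization-plus-disagreement of the fixed subgraph. -/
/-!
With `A = I + L = B + L_D` and `B = I + L_F`, in the Loewner order
`A B⁻¹ A = B + 2 L_D + L_D B⁻¹ L_D ≥ B ≥ I`; the congruence by the symmetric matrix `A⁻¹`
turns this into `A⁻² ≤ B⁻¹`.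
-/

open Matrix
open scoped ComplexOrder

namespace Matrix

variable {𝕜 ι : Type*} [RCLike 𝕜] [Fintype ι] [DecidableEq ι]

lemma PosDef.add_mul_inv_mul_add_sub_posSemidef {B D : Matrix ι ι 𝕜} (hB : B.PosDef)
    (hD : D.PosSemidef) : ((B + D) * B⁻¹ * (B + D) - B).PosSemidef := by
  have hBdet : IsUnit B.det := (isUnit_iff_isUnit_det B).1 hB.isUnit
  have expand : (B + D) * B⁻¹ * (B + D) - B = D + D + D * B⁻¹ * Dᴴ := by
    rw [hD.isHermitian.eq, add_mul, mul_nonsing_inv B hBdet, add_mul, mul_add, mul_add,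
      mul_assoc D, nonsing_inv_mul B hBdet]
    simp only [one_mul, mul_one]
    abel
  rw [expand]
  exact (hD.add hD).add (hB.inv.posSemidef.mul_mul_conjTranspose_same D)

lemma PosDef.inv_sub_inv_mul_inv_add_posSemidef {B D : Matrix ι ι 𝕜} (hB : B.PosDef)
    (hB1 : (B - 1).PosSemidef) (hD : D.PosSemidef) :
    (B⁻¹ - (B + D)⁻¹ * (B + D)⁻¹).PosSemidef := by
  set A := B + D
  have hA : A.PosDef := hB.add_posSemidef hD
  have hAdet : IsUnit A.det := (isUnit_iff_isUnit_det A).1 hA.isUnit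
  have hN : (A * B⁻¹ * A - 1).PosSemidef := by
    simpa using (hB.add_mul_inv_mul_add_sub_posSemidef hD).add hB1
  have congr : (A⁻¹)ᴴ * (A * B⁻¹ * A - 1) * A⁻¹ = B⁻¹ - A⁻¹ * A⁻¹ := by
    rw [hA.inv.isHermitian.eq, mul_sub, sub_mul, mul_one, ← mul_assoc, ← mul_assoc,
      nonsing_inv_mul A hAdet, one_mul, mul_assoc, mul_nonsing_inv A hAdet, mul_one]
  exact congr ▸ hN.conjTranspose_mul_mul_same A⁻¹

end Matrix

theorem polarization_le_fixed_pd {n : ℕ}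
    (L LD LF : Matrix (Fin n) (Fin n) ℝ)
    (hD : LD.PosSemidef) (hF : LF.PosSemidef) (hL : L = LD + LF)
    (s : Fin n → ℝ) :
    s ⬝ᵥ (((1 + L)⁻¹ * (1 + L)⁻¹) *ᵥ s) ≤ s ⬝ᵥ ((1 + LF)⁻¹ *ᵥ s) := by
  have hB : (1 + LF).PosDef := PosDef.one.add_posSemidef hF
  have hGap := hB.inv_sub_inv_mul_inv_add_posSemidef (by simpa using hF) hD
  rw [hL, add_comm LD, ← add_assoc]
  simpa [sub_mulVec, dotProduct_sub] using hGap.dotProduct_mulVec_nonneg s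
end

section
/- Let L be a graph Laplacian, s ∈ ℝ^n, z = (I+L)⁻¹s, and E the edge Laplacian of edge (u,v) with δ = z(u)−z(v). Then sᵀ(I+L)⁻¹s − δ² ≤ sᵀ(I+L+E)⁻¹s ≤ sᵀ(I+L)⁻¹s − δ²/3. -/
open Matrix

/-! By the Sherman–Morrison formula, adding the rank-one matrix `χχᵀ` to the symmetric positive
definite `A = I + L` changes the quadratic form `sᵀA⁻¹s` by exactly `-(χᵀA⁻¹s)² / (1 + r)` with
`r = χᵀA⁻¹χ`, and `χᵀA⁻¹s = z u - z v = δ`. Since `A⁻¹` is positive definite and `A⁻¹ ≤ I`,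
`0 ≤ r ≤ χᵀχ = 2`, so the drop lies between `δ²/3` and `δ²`. -/

theorem Matrix.inv_add_vecMulVec {ι K : Type*} [Fintype ι] [DecidableEq ι] [Field K]
    {A : Matrix ι ι K} (hA : IsUnit A) (x y : ι → K) (h : 1 + y ⬝ᵥ (A⁻¹ *ᵥ x) ≠ 0) :
    (A + vecMulVec x y)⁻¹ =
      A⁻¹ - (1 + y ⬝ᵥ (A⁻¹ *ᵥ x))⁻¹ • vecMulVec (A⁻¹ *ᵥ x) (y ᵥ* A⁻¹) := by
  have hAA : A * A⁻¹ = 1 := mul_nonsing_inv A ((isUnit_iff_isUnit_det A).mp hA)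
  apply inv_eq_right_inv
  set r := y ⬝ᵥ (A⁻¹ *ᵥ x)
  set V := vecMulVec x (y ᵥ* A⁻¹)
  have hcr : (1 + r)⁻¹ * (1 + r) = 1 := inv_mul_cancel₀ h
  calc (A + vecMulVec x y) * (A⁻¹ - (1 + r)⁻¹ • vecMulVec (A⁻¹ *ᵥ x) (y ᵥ* A⁻¹))
      = 1 + (1 - (1 + r)⁻¹ * (1 + r)) • V := by
        rw [add_mul, mul_sub, mul_sub, hAA, mul_smul_comm, mul_smul_comm, mul_vecMulVec,
          mulVec_mulVec, hAA, one_mulVec, vecMulVec_mul, vecMulVec_mul_vecMulVec, vecMulVec_smul]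
        module
    _ = 1 := by rw [hcr, sub_self, zero_smul, add_zero]

theorem Matrix.dotProduct_inv_add_vecMulVec_mulVec {ι K : Type*} [Fintype ι] [DecidableEq ι]
    [Field K]
    {A : Matrix ι ι K} (hA : IsUnit A) (x y s : ι → K) (h : 1 + y ⬝ᵥ (A⁻¹ *ᵥ x) ≠ 0) :
    s ⬝ᵥ ((A + vecMulVec x y)⁻¹ *ᵥ s) =
      s ⬝ᵥ (A⁻¹ *ᵥ s) - (s ⬝ᵥ (A⁻¹ *ᵥ x)) * (y ⬝ᵥ (A⁻¹ *ᵥ s)) / (1 + y ⬝ᵥ (A⁻¹ *ᵥ x)) := by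
  rw [inv_add_vecMulVec hA x y h, sub_mulVec, dotProduct_sub, smul_mulVec, vecMulVec_mulVec,
    ← dotProduct_mulVec]
  simp only [dotProduct_smul, smul_eq_mul, MulOpposite.smul_eq_mul_unop, MulOpposite.unop_op]
  ring

theorem dotProduct_eq_sub_of_edge {ι R : Type*} [Fintype ι] [DecidableEq ι] [Ring R]
    {χ : ι → R} {u v : ι} (huv : u ≠ v) (hχu : χ u = 1) (hχv : χ v = -1)
    (hχ : ∀ w, w ≠ u → w ≠ v → χ w = 0) (f : ι → R) :
    χ ⬝ᵥ f = f u - f v := by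
  have hχ_eq : χ = Pi.single u 1 - Pi.single v 1 := by
    ext w
    by_cases hwu : w = u
    · subst hwu; simp [hχu, huv]
    by_cases hwv : w = v
    · subst hwv; simp [hχv, hwu]
    simp [hχ w hwu hwv, hwu, hwv]
  rw [hχ_eq, sub_dotProduct, single_one_dotProduct, single_one_dotProduct]

theorem Matrix.PosSemidef.dotProduct_inv_one_add_mulVec_le {ι : Type*} [Fintype ι]
    [DecidableEq ι] {L : Matrix ι ι ℝ} (hL : L.PosSemidef) (x : ι → ℝ) :
    x ⬝ᵥ ((1 + L)⁻¹ *ᵥ x) ≤ x ⬝ᵥ x := by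
  set w := (1 + L)⁻¹ *ᵥ x
  have hx : x = w + L *ᵥ w := by
    have hA := (isUnit_iff_isUnit_det _).mp (PosDef.one.add_posSemidef hL).isUnit
    calc x = (1 + L) *ᵥ w := by rw [mulVec_mulVec, mul_nonsing_inv _ hA, one_mulVec]
      _ = w + L *ᵥ w := by rw [add_mulVec, one_mulVec]
  have hLw : 0 ≤ w ⬝ᵥ (L *ᵥ w) := by simpa using hL.dotProduct_mulVec_nonneg w
  have hsq : 0 ≤ (L *ᵥ w) ⬝ᵥ (L *ᵥ w) := by simpa using dotProduct_star_self_nonneg (L *ᵥ w)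
  calc x ⬝ᵥ w = (w + L *ᵥ w) ⬝ᵥ w := by rw [← hx]
    _ ≤ (w + L *ᵥ w) ⬝ᵥ (w + L *ᵥ w) := by
        simp only [add_dotProduct, dotProduct_add, dotProduct_comm (L *ᵥ w) w]; linarith
    _ = x ⬝ᵥ x := by rw [← hx]

theorem Matrix.IsSymm.dotProduct_mulVec_comm {ι R : Type*} [Fintype ι] [CommSemiring R]
    {A : Matrix ι ι R} (hA : A.IsSymm) (x y : ι → R) :
    x ⬝ᵥ (A *ᵥ y) = y ⬝ᵥ (A *ᵥ x) := by
  rw [dotProduct_mulVec, ← mulVec_transpose, hA.eq, dotProduct_comm]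

theorem pd_edge_addition_bounds {n : ℕ}
    (L : Matrix (Fin n) (Fin n) ℝ) (hL : L.PosSemidef)
    (s z χ : Fin n → ℝ) (u v : Fin n) (huv : u ≠ v)
    (hχu : χ u = 1) (hχv : χ v = -1)
    (hχ : ∀ w, w ≠ u → w ≠ v → χ w = 0)
    (E : Matrix (Fin n) (Fin n) ℝ) (hE : E = vecMulVec χ χ)
    (hz : z = (1 + L)⁻¹ *ᵥ s)
    (δ : ℝ) (hδ : δ = z u - z v) :
    s ⬝ᵥ ((1 + L)⁻¹ *ᵥ s) - δ ^ 2 ≤ s ⬝ᵥ ((1 + L + E)⁻¹ *ᵥ s) ∧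
    s ⬝ᵥ ((1 + L + E)⁻¹ *ᵥ s) ≤ s ⬝ᵥ ((1 + L)⁻¹ *ᵥ s) - δ ^ 2 / 3 := by
  have hA : (1 + L).PosDef := PosDef.one.add_posSemidef hL
  set r := χ ⬝ᵥ ((1 + L)⁻¹ *ᵥ χ)
  have hr_nonneg : 0 ≤ r := by simpa using hA.inv.posSemidef.dotProduct_mulVec_nonneg χ
  have hr_le_two : r ≤ 2 := by
    have hχχ : χ ⬝ᵥ χ = 2 := by
      rw [dotProduct_eq_sub_of_edge huv hχu hχv hχ, hχu, hχv]; norm_num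
    exact hχχ ▸ hL.dotProduct_inv_one_add_mulVec_le χ
  have hδ' : χ ⬝ᵥ ((1 + L)⁻¹ *ᵥ s) = δ := by
    rw [hδ, hz, dotProduct_eq_sub_of_edge huv hχu hχv hχ]
  have hsym : (1 + L)⁻¹.IsSymm := isHermitian_iff_isSymm.mp hA.inv.isHermitian
  rw [hE, dotProduct_inv_add_vecMulVec_mulVec hA.isUnit χ χ s (by positivity),
    hsym.dotProduct_mulVec_comm s χ, hδ', ← sq]
  constructor
  · have : δ ^ 2 / (1 + r) ≤ δ ^ 2 := div_le_self (sq_nonneg δ) (by linarith)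
    linarith
  · have : δ ^ 2 / 3 ≤ δ ^ 2 / (1 + r) :=
      div_le_div_of_nonneg_left (sq_nonneg δ) (by positivity) (by linarith)
    linarith
end

section
/- Let L be a graph Laplacian containing edge (u,v) (so L − E is PSD, where E is the edge Laplacian of (u,v)), s ∈ ℝ^n, z = (I+L)⁻¹s, δ = z(u)−z(v), and suppose r = χᵀ(I+L)⁻¹χ ∈ (0,1]. If r < 1, then sᵀ(I+L−E)⁻¹s ≥ sᵀ(I+L)⁻¹s + δ². -/
/-!
Deleting the edge `(u, v)` from `L` is a rank-one downdate `1 + L - χχᵀ` of `1 + L`, so by the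
Sherman–Morrison formula
`sᵀ(1 + L - χχᵀ)⁻¹s = sᵀ(1 + L)⁻¹s + (χᵀ(1 + L)⁻¹s)² / (1 - r)`.
Symmetry of `(1 + L)⁻¹` identifies `χᵀ(1 + L)⁻¹s` with `χᵀz = δ`, and `0 < 1 - r ≤ 1` gives
`δ² / (1 - r) ≥ δ²`.
-/

open Matrix

namespace Matrix

variable {ι 𝕜 : Type*} [Fintype ι] [DecidableEq ι] [Field 𝕜]

theorem inv_sub_vecMulVec {M : Matrix ι ι 𝕜} (hM : IsUnit M) {x y : ι → 𝕜}
    (h : y ⬝ᵥ M⁻¹ *ᵥ x ≠ 1) :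
    (M - vecMulVec x y)⁻¹ =
      M⁻¹ + (1 - y ⬝ᵥ M⁻¹ *ᵥ x)⁻¹ • vecMulVec (M⁻¹ *ᵥ x) (y ᵥ* M⁻¹) := by
  have hMM : M * M⁻¹ = 1 := mul_nonsing_inv M ((isUnit_iff_isUnit_det M).1 hM)
  have hr : 1 - y ⬝ᵥ M⁻¹ *ᵥ x ≠ 0 := sub_ne_zero.2 h.symm
  apply inv_eq_right_inv
  rw [sub_mul, mul_add, mul_add, hMM, Matrix.mul_smul, Matrix.mul_smul, mul_vecMulVec,
    mulVec_mulVec, hMM, one_mulVec, vecMulVec_mul_vecMulVec, vecMulVec_mul, vecMulVec_smul]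
  generalize y ⬝ᵥ M⁻¹ *ᵥ x = r at hr ⊢
  match_scalars
  · rfl
  · field_simp
    ring

theorem dotProduct_inv_sub_vecMulVec_mulVec {M : Matrix ι ι 𝕜} (hM : IsUnit M) {x y : ι → 𝕜}
    (h : y ⬝ᵥ M⁻¹ *ᵥ x ≠ 1) (s t : ι → 𝕜) :
    s ⬝ᵥ (M - vecMulVec x y)⁻¹ *ᵥ t =
      s ⬝ᵥ M⁻¹ *ᵥ t + (s ⬝ᵥ M⁻¹ *ᵥ x) * (y ⬝ᵥ M⁻¹ *ᵥ t) / (1 - y ⬝ᵥ M⁻¹ *ᵥ x) := by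
  rw [inv_sub_vecMulVec hM h, add_mulVec, smul_mulVec, vecMulVec_mulVec, op_smul_eq_smul,
    dotProduct_add, dotProduct_smul, dotProduct_smul, ← dotProduct_mulVec, smul_eq_mul,
    smul_eq_mul]
  ring

end Matrix

theorem dotProduct_eq_sub_of_edgeVector {ι R : Type*} [Fintype ι] [CommRing R] {χ : ι → R}
    {u v : ι} (huv : u ≠ v) (hχu : χ u = 1) (hχv : χ v = -1)
    (hχ : ∀ w, w ≠ u → w ≠ v → χ w = 0) (z : ι → R) :
    χ ⬝ᵥ z = z u - z v := by
  rw [dotProduct, Fintype.sum_eq_add u v huv fun w hw => by rw [hχ w hw.1 hw.2, zero_mul],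
    hχu, hχv]
  ring

theorem pd_edge_deletion_bound_general {n : ℕ}
    (L : Matrix (Fin n) (Fin n) ℝ) (hL : L.PosSemidef)
    (s z χ : Fin n → ℝ) (u v : Fin n) (huv : u ≠ v)
    (hχu : χ u = 1) (hχv : χ v = -1)
    (hχ : ∀ w, w ≠ u → w ≠ v → χ w = 0)
    (E : Matrix (Fin n) (Fin n) ℝ) (hE : E = vecMulVec χ χ)
    (hz : z = (1 + L)⁻¹ *ᵥ s)
    (δ r : ℝ) (hδ : δ = z u - z v) (hr : r = χ ⬝ᵥ ((1 + L)⁻¹ *ᵥ χ))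
    (hr0 : 0 < r) (hr1 : r < 1) :
    s ⬝ᵥ ((1 + L - E)⁻¹ *ᵥ s) ≥ s ⬝ᵥ ((1 + L)⁻¹ *ᵥ s) + δ ^ 2 := by
  have hM : (1 + L).PosDef := PosDef.one.add_posSemidef hL
  have hMinv_symm : (1 + L)⁻¹ᵀ = (1 + L)⁻¹ := hM.isHermitian.inv
  have hχs : χ ⬝ᵥ (1 + L)⁻¹ *ᵥ s = δ := by
    rw [← hz, hδ, dotProduct_eq_sub_of_edgeVector huv hχu hχv hχ]
  have hsχ : s ⬝ᵥ (1 + L)⁻¹ *ᵥ χ = δ := by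
    rw [dotProduct_mulVec, ← hMinv_symm, vecMul_transpose, dotProduct_comm, hχs]
  rw [hE, dotProduct_inv_sub_vecMulVec_mulVec hM.isUnit (hr ▸ hr1.ne), ← hr, hsχ, hχs, ← sq]
  have hδ_le : δ ^ 2 ≤ δ ^ 2 / (1 - r) := le_div_self (sq_nonneg δ) (by linarith) (by linarith)
  linarith

theorem pd_edge_deletion_bound {n : ℕ}
    (L : Matrix (Fin n) (Fin n) ℝ) (hL : L.PosSemidef)
    (s z χ : Fin n → ℝ) (u v : Fin n) (huv : u ≠ v)
    (hχu : χ u = 1) (hχv : χ v = -1)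
    (hχ : ∀ w, w ≠ u → w ≠ v → χ w = 0)
    (E : Matrix (Fin n) (Fin n) ℝ) (hE : E = vecMulVec χ χ)
    (hLE : (L - E).PosSemidef)
    (hz : z = (1 + L)⁻¹ *ᵥ s)
    (δ r : ℝ) (hδ : δ = z u - z v) (hr : r = χ ⬝ᵥ ((1 + L)⁻¹ *ᵥ χ))
    (hr0 : 0 < r) (hr1 : r < 1) :
    s ⬝ᵥ ((1 + L - E)⁻¹ *ᵥ s) ≥ s ⬝ᵥ ((1 + L)⁻¹ *ᵥ s) + δ ^ 2 :=
  pd_edge_deletion_bound_general L hL s z χ u v huv hχu hχv hχ E hE hz δ r hδ hr hr0 hr1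
end

section
/- If an edge (u,v) belongs to a graph with Laplacian L (i.e., L − E is PSD where E = χχᵀ is the edge Laplacian of (u,v)), then the quantity r = χᵀ(I+L)⁻¹χ satisfies 0 < r ≤ 1. -/
open Matrix

namespace Matrix

variable {ι : Type*} [Fintype ι]

theorem dotProduct_vecMulVec_self_mulVec {R : Type*} [CommSemiring R] (x y : ι → R) :
    y ⬝ᵥ (vecMulVec x x *ᵥ y) = (x ⬝ᵥ y) ^ 2 := by
  rw [vecMulVec_mulVec, op_smul_eq_smul, dotProduct_smul, smul_eq_mul, dotProduct_comm, sq]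

/-- With `y = M⁻¹ x` and `r = xᵀ M⁻¹ x`, testing `M - x xᵀ ⪰ 0` against `y` gives `r - r² ≥ 0`. -/
theorem dotProduct_inv_mulVec_le_one [DecidableEq ι] {M : Matrix ι ι ℝ} (hM : M.PosDef)
    {x : ι → ℝ} (h : (M - vecMulVec x x).PosSemidef) : x ⬝ᵥ (M⁻¹ *ᵥ x) ≤ 1 := by
  set y := M⁻¹ *ᵥ x
  have hMy : M *ᵥ y = x := by
    rw [mulVec_mulVec, mul_nonsing_inv _ ((isUnit_iff_isUnit_det M).mp hM.isUnit), one_mulVec]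
  have hquad : 0 ≤ x ⬝ᵥ y - (x ⬝ᵥ y) ^ 2 := by
    have := h.dotProduct_mulVec_nonneg y
    rwa [star_trivial, sub_mulVec, dotProduct_sub, hMy, dotProduct_comm y x,
      dotProduct_vecMulVec_self_mulVec] at this
  nlinarith

end Matrix

theorem effective_resistance_of_edge_in_graph_general {n : ℕ}
    (L : Matrix (Fin n) (Fin n) ℝ) (hL : L.PosSemidef)
    (χ : Fin n → ℝ) (u : Fin n)
    (hχu : χ u = 1)
    (E : Matrix (Fin n) (Fin n) ℝ) (hE : E = vecMulVec χ χ)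
    (hLE : (L - E).PosSemidef) :
    0 < χ ⬝ᵥ ((1 + L)⁻¹ *ᵥ χ) ∧ χ ⬝ᵥ ((1 + L)⁻¹ *ᵥ χ) ≤ 1 := by
  have hχ : χ ≠ 0 := fun h ↦ by simp [h] at hχu
  have hM : (1 + L).PosDef := PosDef.one.add_posSemidef hL
  refine ⟨by simpa using hM.inv.dotProduct_mulVec_pos hχ, dotProduct_inv_mulVec_le_one hM ?_⟩
  rw [← hE, add_sub_assoc]
  exact PosDef.one.posSemidef.add hLE

theorem effective_resistance_of_edge_in_graph {n : ℕ}
    (L : Matrix (Fin n) (Fin n) ℝ) (hL : L.PosSemidef)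
    (χ : Fin n → ℝ) (u v : Fin n) (huv : u ≠ v)
    (hχu : χ u = 1) (hχv : χ v = -1)
    (hχ : ∀ w, w ≠ u → w ≠ v → χ w = 0)
    (E : Matrix (Fin n) (Fin n) ℝ) (hE : E = vecMulVec χ χ)
    (hLE : (L - E).PosSemidef) :
    0 < χ ⬝ᵥ ((1 + L)⁻¹ *ᵥ χ) ∧ χ ⬝ᵥ ((1 + L)⁻¹ *ᵥ χ) ≤ 1 :=
  effective_resistance_of_edge_in_graph_general L hL χ u hχu E hE hLE
end

section
/- Let L be a graph Laplacian, s ∈ ℝ^n, z = (I+L)⁻¹s. Let E₁ = χ₁χ₁ᵀ and E₂ = χ₂χ₂ᵀ be edge Laplacians with δ₁ = χ₁ᵀz, δ₂ = χ₂ᵀz, r₁ = χ₁ᵀ(I+L)⁻¹χ₁, r₂,₁ = χ₂ᵀ(I+L+E₁)⁻¹χ₂, and α = χ₁ᵀ(I+L)⁻¹χ₂/(1+r₁). Assume edge (u₂,v₂) is in the graph so that L + E₁ − E₂ is PSD and r₂,₁ < 1. Then sᵀ(I+L+E₁−E₂)⁻¹s = sᵀ(I+L)⁻¹s − δ₁²/(1+r₁)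 + (δ₂ − α·δ₁)²/(1−r₂,₁). -/
/-!
Both updates are rank one: `1 + L + E₁ = (1 + L) + χ₁ χ₁ᵀ` and
`1 + L + E₁ - E₂ = (1 + L + E₁) + χ₂ (-χ₂)ᵀ`. Applying the Sherman–Morrison formula to the
quadratic form of the first update gives `sᵀ(1 + L + E₁)⁻¹s` and `χ₂ᵀ(1 + L + E₁)⁻¹s = δ₂ - α δ₁`;
applying it to the second update then gives the claim, the denominator being `1 - r₂₁`.
-/

open Matrix

namespace Matrix

section CommSemiring

variable {m R : Type*} [Fintype m] [CommSemiring R]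

theorem dotProduct_vecMulVec_mulVec (x u v y : m → R) :
    x ⬝ᵥ (vecMulVec u v *ᵥ y) = (x ⬝ᵥ u) * (v ⬝ᵥ y) := by
  simp [vecMulVec_mulVec, mul_comm]

theorem IsSymm.dotProduct_mulVec_comm_s11 {A : Matrix m m R} (hA : A.IsSymm) (x y : m → R) :
    x ⬝ᵥ (A *ᵥ y) = y ⬝ᵥ (A *ᵥ x) := by
  rw [dotProduct_mulVec, ← mulVec_transpose, hA.eq, dotProduct_comm]

end CommSemiring

variable {m K : Type*} [Fintype m] [DecidableEq m] [Field K]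

theorem inv_add_vecMulVec_s11 {M : Matrix m m K} (hM : IsUnit M) (u v : m → K)
    (hc : 1 + v ⬝ᵥ (M⁻¹ *ᵥ u) ≠ 0) :
    (M + vecMulVec u v)⁻¹ =
      M⁻¹ - (1 + v ⬝ᵥ (M⁻¹ *ᵥ u))⁻¹ • vecMulVec (M⁻¹ *ᵥ u) (v ᵥ* M⁻¹) := by
  have hMM : M * M⁻¹ = 1 := mul_nonsing_inv M ((isUnit_iff_isUnit_det M).mp hM)
  refine inv_eq_right_inv ?_
  rw [mul_sub, add_mul, add_mul, hMM, Matrix.mul_smul, Matrix.mul_smul, mul_vecMulVec,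
    mulVec_mulVec, hMM, one_mulVec, vecMulVec_mul_vecMulVec, vecMulVec_mul, vecMulVec_smul]
  match_scalars <;> field_simp
  ring

theorem dotProduct_inv_add_vecMulVec_mulVec_s11 {M : Matrix m m K} (hM : IsUnit M) (u v : m → K)
    (hc : 1 + v ⬝ᵥ (M⁻¹ *ᵥ u) ≠ 0) (x y : m → K) :
    x ⬝ᵥ ((M + vecMulVec u v)⁻¹ *ᵥ y) =
      x ⬝ᵥ (M⁻¹ *ᵥ y) -
        (x ⬝ᵥ (M⁻¹ *ᵥ u)) * (v ⬝ᵥ (M⁻¹ *ᵥ y)) / (1 + v ⬝ᵥ (M⁻¹ *ᵥ u)) := by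
  rw [inv_add_vecMulVec_s11 hM u v hc, sub_mulVec, smul_mulVec, dotProduct_sub, dotProduct_smul,
    dotProduct_vecMulVec_mulVec, ← dotProduct_mulVec, smul_eq_mul]
  field_simp

theorem IsSymm.dotProduct_inv_add_vecMulVec_mulVec_s11 {M : Matrix m m K} (hMs : M⁻¹.IsSymm)
    (hM : IsUnit M) (u v : m → K) (hc : 1 + v ⬝ᵥ (M⁻¹ *ᵥ u) ≠ 0) (x y : m → K) :
    x ⬝ᵥ ((M + vecMulVec u v)⁻¹ *ᵥ y) =
      x ⬝ᵥ (M⁻¹ *ᵥ y) -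
        (u ⬝ᵥ (M⁻¹ *ᵥ x)) * (v ⬝ᵥ (M⁻¹ *ᵥ y)) / (1 + v ⬝ᵥ (M⁻¹ *ᵥ u)) := by
  rw [Matrix.dotProduct_inv_add_vecMulVec_mulVec_s11 hM u v hc, hMs.dotProduct_mulVec_comm_s11 x u]

end Matrix

theorem pd_edge_swap_general {n : ℕ}
    (L : Matrix (Fin n) (Fin n) ℝ) (hL : L.PosSemidef)
    (s z χ₁ χ₂ : Fin n → ℝ)
    (E₁ E₂ : Matrix (Fin n) (Fin n) ℝ)
    (hE₁ : E₁ = vecMulVec χ₁ χ₁) (hE₂ : E₂ = vecMulVec χ₂ χ₂)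
    (hz : z = (1 + L)⁻¹ *ᵥ s)
    (δ₁ δ₂ r₁ r₂₁ α : ℝ)
    (hδ₁ : δ₁ = χ₁ ⬝ᵥ z) (hδ₂ : δ₂ = χ₂ ⬝ᵥ z)
    (hr₁ : r₁ = χ₁ ⬝ᵥ ((1 + L)⁻¹ *ᵥ χ₁))
    (hr₂₁ : r₂₁ = χ₂ ⬝ᵥ ((1 + L + E₁)⁻¹ *ᵥ χ₂))
    (hα : α = χ₁ ⬝ᵥ ((1 + L)⁻¹ *ᵥ χ₂) / (1 + r₁))
    (hlt : r₂₁ < 1) :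
    s ⬝ᵥ ((1 + L + E₁ - E₂)⁻¹ *ᵥ s) =
      s ⬝ᵥ ((1 + L)⁻¹ *ᵥ s) - δ₁ ^ 2 / (1 + r₁) + (δ₂ - α * δ₁) ^ 2 / (1 - r₂₁) := by
  subst hE₁ hE₂ hz hδ₁ hδ₂
  have hA : (1 + L).PosDef := PosDef.one.add_posSemidef hL
  have hB : (1 + L + vecMulVec χ₁ χ₁).PosDef :=
    hA.add_posSemidef (by simpa using posSemidef_vecMulVec_self_star χ₁)
  have hAsymm := isHermitian_iff_isSymm.mp hA.inv.isHermitian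
  have hBsymm := isHermitian_iff_isSymm.mp hB.inv.isHermitian
  have hc₁ : 1 + χ₁ ⬝ᵥ ((1 + L)⁻¹ *ᵥ χ₁) ≠ 0 := by
    have := hA.inv.posSemidef.dotProduct_mulVec_nonneg χ₁
    rw [star_trivial] at this
    positivity
  have hc₂ : 1 + -χ₂ ⬝ᵥ ((1 + L + vecMulVec χ₁ χ₁)⁻¹ *ᵥ χ₂) ≠ 0 := by
    rw [neg_dotProduct, ← hr₂₁]
    linarith
  have hC : 1 + L + vecMulVec χ₁ χ₁ - vecMulVec χ₂ χ₂ =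
      1 + L + vecMulVec χ₁ χ₁ + vecMulVec χ₂ (-χ₂) := by
    rw [vecMulVec_neg, sub_eq_add_neg]
  have hBs : s ⬝ᵥ ((1 + L + vecMulVec χ₁ χ₁)⁻¹ *ᵥ s) =
      s ⬝ᵥ ((1 + L)⁻¹ *ᵥ s) - (χ₁ ⬝ᵥ ((1 + L)⁻¹ *ᵥ s)) ^ 2 / (1 + r₁) := by
    rw [hAsymm.dotProduct_inv_add_vecMulVec_mulVec_s11 hA.isUnit _ _ hc₁, ← hr₁, sq]
  have hBχ₂ : χ₂ ⬝ᵥ ((1 + L + vecMulVec χ₁ χ₁)⁻¹ *ᵥ s) =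
      χ₂ ⬝ᵥ ((1 + L)⁻¹ *ᵥ s) - α * χ₁ ⬝ᵥ ((1 + L)⁻¹ *ᵥ s) := by
    rw [hAsymm.dotProduct_inv_add_vecMulVec_mulVec_s11 hA.isUnit _ _ hc₁, ← hr₁, hα]
    ring
  rw [hC, hBsymm.dotProduct_inv_add_vecMulVec_mulVec_s11 hB.isUnit _ _ hc₂, neg_dotProduct,
    neg_dotProduct, ← hr₂₁, hBs, hBχ₂]
  ring

theorem pd_edge_swap {n : ℕ}
    (L : Matrix (Fin n) (Fin n) ℝ) (hL : L.PosSemidef)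
    (s z χ₁ χ₂ : Fin n → ℝ)
    (u₁ v₁ u₂ v₂ : Fin n) (h1 : u₁ ≠ v₁) (h2 : u₂ ≠ v₂)
    (hχ₁u : χ₁ u₁ = 1) (hχ₁v : χ₁ v₁ = -1)
    (hχ₁ : ∀ w, w ≠ u₁ → w ≠ v₁ → χ₁ w = 0)
    (hχ₂u : χ₂ u₂ = 1) (hχ₂v : χ₂ v₂ = -1)
    (hχ₂ : ∀ w, w ≠ u₂ → w ≠ v₂ → χ₂ w = 0)
    (E₁ E₂ : Matrix (Fin n) (Fin n) ℝ)
    (hE₁ : E₁ = vecMulVec χ₁ χ₁) (hE₂ : E₂ = vecMulVec χ₂ χ₂)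
    (hz : z = (1 + L)⁻¹ *ᵥ s)
    (δ₁ δ₂ r₁ r₂₁ α : ℝ)
    (hδ₁ : δ₁ = χ₁ ⬝ᵥ z) (hδ₂ : δ₂ = χ₂ ⬝ᵥ z)
    (hr₁ : r₁ = χ₁ ⬝ᵥ ((1 + L)⁻¹ *ᵥ χ₁))
    (hr₂₁ : r₂₁ = χ₂ ⬝ᵥ ((1 + L + E₁)⁻¹ *ᵥ χ₂))
    (hα : α = χ₁ ⬝ᵥ ((1 + L)⁻¹ *ᵥ χ₂) / (1 + r₁))
    (hpsd : (L + E₁ - E₂).PosSemidef) (hlt : r₂₁ < 1) :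
    s ⬝ᵥ ((1 + L + E₁ - E₂)⁻¹ *ᵥ s) =
      s ⬝ᵥ ((1 + L)⁻¹ *ᵥ s) - δ₁ ^ 2 / (1 + r₁) + (δ₂ - α * δ₁) ^ 2 / (1 - r₂₁) :=
  pd_edge_swap_general L hL s z χ₁ χ₂ E₁ E₂ hE₁ hE₂ hz δ₁ δ₂ r₁ r₂₁ α hδ₁ hδ₂ hr₁ hr₂₁ hα hlt
end

section
/- For a graph Laplacian L, s ∈ ℝ^n, edge Laplacian E of an edge not in L, with δ = χᵀz for z = (I+L)⁻¹s: adding the edge never increases polarization+disagreement, i.e., sᵀ(I+L+E)⁻¹s ≤ sᵀ(I+L)⁻¹s, with equality if and only if δ = 0. -/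
/-!
With `A = 1 + L` positive definite, the Sherman–Morrison formula
`(A + χχᵀ)⁻¹ = A⁻¹ - A⁻¹χχᵀA⁻¹ / (1 + χᵀA⁻¹χ)` shows that adding the edge lowers `sᵀA⁻¹s`
by exactly `δ² / (1 + r)`, where `δ = χᵀA⁻¹s = z u - z v` and `r = χᵀA⁻¹χ ≥ 0`.
-/

open Matrix

namespace Matrix

variable {n K : Type*} [Fintype n] [DecidableEq n] [Field K]

theorem inv_add_vecMulVec_s18 {A : Matrix n n K} (hA : IsUnit A) {a b : n → K}
    (h : 1 + b ⬝ᵥ A⁻¹ *ᵥ a ≠ 0) :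
    (A + vecMulVec a b)⁻¹ =
      A⁻¹ - (1 + b ⬝ᵥ A⁻¹ *ᵥ a)⁻¹ • vecMulVec (A⁻¹ *ᵥ a) (b ᵥ* A⁻¹) := by
  refine inv_eq_right_inv ?_
  set r := b ⬝ᵥ A⁻¹ *ᵥ a
  have hAA : A * A⁻¹ = 1 := mul_nonsing_inv A ((isUnit_iff_isUnit_det A).mp hA)
  have hc : (1 + r)⁻¹ * r = 1 - (1 + r)⁻¹ := by
    field_simp; ring
  rw [add_mul, mul_sub, mul_sub, Matrix.mul_smul, Matrix.mul_smul, hAA, mul_vecMulVec,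
    mulVec_mulVec, hAA, one_mulVec, vecMulVec_mul, vecMulVec_mul_vecMulVec, vecMulVec_smul,
    smul_smul, hc, sub_smul, one_smul]
  abel

theorem dotProduct_inv_add_vecMulVec_mulVec_s18 {A : Matrix n n K} (hA : IsUnit A) {a b : n → K}
    (h : 1 + b ⬝ᵥ A⁻¹ *ᵥ a ≠ 0) (s t : n → K) :
    s ⬝ᵥ (A + vecMulVec a b)⁻¹ *ᵥ t =
      s ⬝ᵥ A⁻¹ *ᵥ t - (s ⬝ᵥ A⁻¹ *ᵥ a) * (b ⬝ᵥ A⁻¹ *ᵥ t) / (1 + b ⬝ᵥ A⁻¹ *ᵥ a) := by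
  rw [inv_add_vecMulVec_s18 hA h, sub_mulVec, smul_mulVec, vecMulVec_mulVec, ← dotProduct_mulVec,
    dotProduct_sub, dotProduct_smul, dotProduct_smul]
  simp only [smul_eq_mul, MulOpposite.smul_eq_mul_unop, MulOpposite.unop_op]
  ring

theorem PosDef.dotProduct_inv_mulVec_self_nonneg {A : Matrix n n ℝ} (hA : A.PosDef)
    (x : n → ℝ) : 0 ≤ x ⬝ᵥ A⁻¹ *ᵥ x := by
  simpa using hA.inv.posSemidef.dotProduct_mulVec_nonneg x

theorem PosDef.dotProduct_inv_add_vecMulVec_self_mulVec {A : Matrix n n ℝ} (hA : A.PosDef)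
    (χ s : n → ℝ) :
    s ⬝ᵥ (A + vecMulVec χ χ)⁻¹ *ᵥ s =
      s ⬝ᵥ A⁻¹ *ᵥ s - (χ ⬝ᵥ A⁻¹ *ᵥ s) ^ 2 / (1 + χ ⬝ᵥ A⁻¹ *ᵥ χ) := by
  have hr := hA.dotProduct_inv_mulVec_self_nonneg χ
  have hsymm : s ⬝ᵥ A⁻¹ *ᵥ χ = χ ⬝ᵥ A⁻¹ *ᵥ s := by
    rw [dotProduct_mulVec, ← mulVec_transpose, dotProduct_comm,
      ← conjTranspose_eq_transpose_of_trivial, hA.inv.isHermitian.eq]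
  rw [dotProduct_inv_add_vecMulVec_mulVec_s18 hA.isUnit (by positivity), hsymm, sq]

theorem PosDef.dotProduct_inv_add_vecMulVec_self_mulVec_le {A : Matrix n n ℝ} (hA : A.PosDef)
    (χ s : n → ℝ) :
    s ⬝ᵥ (A + vecMulVec χ χ)⁻¹ *ᵥ s ≤ s ⬝ᵥ A⁻¹ *ᵥ s ∧
      (s ⬝ᵥ (A + vecMulVec χ χ)⁻¹ *ᵥ s = s ⬝ᵥ A⁻¹ *ᵥ s ↔ χ ⬝ᵥ A⁻¹ *ᵥ s = 0) := by
  have hr := hA.dotProduct_inv_mulVec_self_nonneg χ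
  rw [hA.dotProduct_inv_add_vecMulVec_self_mulVec, sub_eq_self, div_eq_zero_iff,
    or_iff_left (by positivity), pow_eq_zero_iff two_ne_zero]
  exact ⟨sub_le_self _ (by positivity), Iff.rfl⟩

end Matrix

theorem eq_single_sub_single {ι R : Type*} [DecidableEq ι] [Ring R] {χ : ι → R} {u v : ι}
    (huv : u ≠ v) (hu : χ u = 1) (hv : χ v = -1) (h : ∀ w, w ≠ u → w ≠ v → χ w = 0) :
    χ = Pi.single u 1 - Pi.single v 1 := by
  funext w
  by_cases hwu : w = u
  · subst hwu; simp [hu, huv]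
  by_cases hwv : w = v
  · subst hwv; simp [hv, hwu]
  simp [h w hwu hwv, hwu, hwv]

theorem pd_edge_addition_never_increases {n : ℕ}
    (L : Matrix (Fin n) (Fin n) ℝ) (hL : L.PosSemidef)
    (s z χ : Fin n → ℝ) (u v : Fin n) (huv : u ≠ v)
    (hχu : χ u = 1) (hχv : χ v = -1)
    (hχ : ∀ w, w ≠ u → w ≠ v → χ w = 0)
    (E : Matrix (Fin n) (Fin n) ℝ) (hE : E = vecMulVec χ χ)
    (hz : z = (1 + L)⁻¹ *ᵥ s)
    (δ : ℝ) (hδ : δ = z u - z v) :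
    s ⬝ᵥ ((1 + L + E)⁻¹ *ᵥ s) ≤ s ⬝ᵥ ((1 + L)⁻¹ *ᵥ s) ∧
    (s ⬝ᵥ ((1 + L + E)⁻¹ *ᵥ s) = s ⬝ᵥ ((1 + L)⁻¹ *ᵥ s) ↔ δ = 0) := by
  have hδχ : δ = χ ⬝ᵥ (1 + L)⁻¹ *ᵥ s := by
    rw [hδ, hz, eq_single_sub_single huv hχu hχv hχ, sub_dotProduct, single_dotProduct,
      single_dotProduct, one_mul, one_mul]
  rw [hE, hδχ]
  exact (PosDef.one.add_posSemidef hL).dotProduct_inv_add_vecMulVec_self_mulVec_le χ s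
end
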